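/- A local Maxwellian f(X, ξ) = ρ(X)/(2πRT)^{3/2} · exp(−|ξ − v(X)|²/(2RT)) with rigid-body velocity field v(X) = u + X × ω (u, ω constant vectors, T constant) satisfies the detailed-balance condition f(X, ξ')·f(X − σα, ξ*') = f(X, ξ)·f(X − σα, ξ*) for all X, all ξ, ξ*, and all unit vectors α. -/

import Mathlib

open RealInnerProductSpace

/-- The cross product on `EuclideanSpace ℝ (Fin 3)`. -/
noncomputable def cross3 (a b : EuclideanSpace ℝ (Fin 3)) : EuclideanSpace ℝ (Fin 3) :=
  (WithLp.equiv 2 (Fin 3 → ℝ)).symm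
    (crossProduct ((WithLp.equiv 2 (Fin 3 → ℝ)) a) ((WithLp.equiv 2 (Fin 3 → ℝ)) b))

lemma cross3_sub_smul (X α ω : EuclideanSpace ℝ (Fin 3)) (σ : ℝ) :
    cross3 (X - σ • α) ω = cross3 X ω - σ • cross3 α ω := by
  simp [cross3, map_sub, map_smul]

lemma cross3_inner_self (α ω : EuclideanSpace ℝ (Fin 3)) : ⟪cross3 α ω, α⟫ = 0 := by
  simp [cross3, EuclideanSpace.inner_eq_star_dotProduct, crossProduct, Fin.sum_univ_three]
  simp only [Matrix.vecHead, Matrix.vecTail, Function.comp_apply, Fin.succ_zero_eq_one, Fin.succ_one_eq_two]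
  ring

lemma norm_id {E : Type*} [NormedAddCommGroup E] [InnerProductSpace ℝ E]
    (a b ξ ξs α : E) (hα : ‖α‖ = 1) (hab : ⟪b - a, α⟫ = 0) :
    ‖ξ + ⟪ξs - ξ, α⟫ • α - a‖ ^ 2 + ‖ξs - ⟪ξs - ξ, α⟫ • α - b‖ ^ 2
      = ‖ξ - a‖ ^ 2 + ‖ξs - b‖ ^ 2 := by
  have hαα : ⟪α, α⟫ = (1:ℝ) := by
    rw [real_inner_self_eq_norm_sq, hα]; norm_num
  simp only [← real_inner_self_eq_norm_sq] at *
  simp only [inner_sub_left, inner_sub_right, inner_add_left, inner_add_right,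
    real_inner_smul_left, real_inner_smul_right, real_inner_comm ξ α,
    real_inner_comm ξs α, real_inner_comm a α, real_inner_comm b α] at *
  linear_combination (2 * ((inner ℝ ξs α : ℝ) - inner ℝ ξ α) ^ 2) * hαα
    + (2 * ((inner ℝ ξs α : ℝ) - inner ℝ ξ α)) * hab

/-- A local Maxwellian with rigid-body velocity field `v(X) = u + X × ω` and constant
temperature satisfies the detailed-balance condition for the Enskog collision rule. -/
theorem maxwellian_detailed_balance
    (ρ : EuclideanSpace ℝ (Fin 3) → ℝ) (hρ : ∀ X, 0 < ρ X)
    (R T σ : ℝ) (hR : 0 < R) (hT : 0 < T) (hσ : 0 < σ)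
    (u ω : EuclideanSpace ℝ (Fin 3))
    (v : EuclideanSpace ℝ (Fin 3) → EuclideanSpace ℝ (Fin 3))
    (hv : ∀ X, v X = u + cross3 X ω)
    (f : EuclideanSpace ℝ (Fin 3) → EuclideanSpace ℝ (Fin 3) → ℝ)
    (hf : ∀ X ξ, f X ξ =
      ρ X / (2 * Real.pi * R * T) ^ ((3 : ℝ) / 2)
        * Real.exp (-(‖ξ - v X‖ ^ 2 / (2 * R * T)))) :
    ∀ (X ξ ξs α : EuclideanSpace ℝ (Fin 3)), ‖α‖ = 1 →
      f X (ξ + ⟪ξs - ξ, α⟫ • α) * f (X - σ • α) (ξs - ⟪ξs - ξ, α⟫ • α)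
        = f X ξ * f (X - σ • α) ξs := by
  intro X ξ ξs α hα
  have hab : ⟪v (X - σ • α) - v X, α⟫ = 0 := by
    rw [hv, hv, cross3_sub_smul]
    have : u + (cross3 X ω - σ • cross3 α ω) - (u + cross3 X ω) = -(σ • cross3 α ω) := by
      abel
    rw [this, inner_neg_left, real_inner_smul_left, cross3_inner_self]
    ring
  have key := norm_id (v X) (v (X - σ • α)) ξ ξs α hα hab
  simp only [hf]
  have hexp : Real.exp (-(‖ξ + ⟪ξs - ξ, α⟫ • α - v X‖ ^ 2 / (2 * R * T)))
      * Real.exp (-(‖ξs - ⟪ξs - ξ, α⟫ • α - v (X - σ • α)‖ ^ 2 / (2 * R * T)))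
      = Real.exp (-(‖ξ - v X‖ ^ 2 / (2 * R * T)))
      * Real.exp (-(‖ξs - v (X - σ • α)‖ ^ 2 / (2 * R * T))) := by
    rw [← Real.exp_add, ← Real.exp_add]
    congr 1
    linear_combination (-(1 / (2 * R * T))) * key
  calc ρ X / (2 * Real.pi * R * T) ^ ((3:ℝ) / 2)
        * Real.exp (-(‖ξ + ⟪ξs - ξ, α⟫ • α - v X‖ ^ 2 / (2 * R * T)))
      * (ρ (X - σ • α) / (2 * Real.pi * R * T) ^ ((3:ℝ) / 2)
        * Real.exp (-(‖ξs - ⟪ξs - ξ, α⟫ • α - v (X - σ • α)‖ ^ 2 / (2 * R * T))))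
      = ρ X / (2 * Real.pi * R * T) ^ ((3:ℝ) / 2)
        * (ρ (X - σ • α) / (2 * Real.pi * R * T) ^ ((3:ℝ) / 2))
        * (Real.exp (-(‖ξ + ⟪ξs - ξ, α⟫ • α - v X‖ ^ 2 / (2 * R * T)))
          * Real.exp (-(‖ξs - ⟪ξs - ξ, α⟫ • α - v (X - σ • α)‖ ^ 2 / (2 * R * T)))) := by ring
    _ = ρ X / (2 * Real.pi * R * T) ^ ((3:ℝ) / 2)
        * (ρ (X - σ • α) / (2 * Real.pi * R * T) ^ ((3:ℝ) / 2))
        * (Real.exp (-(‖ξ - v X‖ ^ 2 / (2 * R * T)))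
          * Real.exp (-(‖ξs - v (X - σ • α)‖ ^ 2 / (2 * R * T)))) := by rw [hexp]
    _ = _ := by ring
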